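/- Katakernel Lemma, part 2: Let A be an additive abelian group and let Γ, Δ be two prerings of endogenies of A such that every γ ∈ Γ commutes sharply with every δ ∈ Δ. Then the bi-katakernel Kat(Γ, Δ) := Kat(Γ) + Kat(Δ) is fully Γ-invariant and fully Δ-invariant: φ[Kat(Γ, Δ)] ⊆ Kat(Γ, Δ) for every φ ∈ Γ ∪ Δ. -/

import Mathlib

open Pointwise

variable {A : Type*} [AddCommGroup A]

/-- The fibre `γ[a]` of a relation `γ ⊆ A × A` over `a`. -/
def fib (γ : Set (A × A)) (a : A) : Set A := {b | (a, b) ∈ γ}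

/-- The image `γ[S]` of a set `S ⊆ A` under a relation `γ ⊆ A × A`. -/
def eimg (γ : Set (A × A)) (S : Set A) : Set A := {b | ∃ a ∈ S, (a, b) ∈ γ}

/-- The katakernel `kat γ = γ[0]`. -/
def kat (γ : Set (A × A)) : Set A := {b | ((0 : A), b) ∈ γ}

/-- The image `im γ = γ[A]`. -/
def eim (γ : Set (A × A)) : Set A := {b | ∃ a, (a, b) ∈ γ}

/-- `γ` is (the carrier of) an additive subgroup of `A × A`. -/
def IsAddSubgroupSet (γ : Set (A × A)) : Prop :=
  (0 : A × A) ∈ γ ∧ (∀ p ∈ γ, ∀ q ∈ γ, p + q ∈ γ) ∧ (∀ p ∈ γ, -p ∈ γ)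

/-- An endogeny of `A`: an additive subgroup of `A × A` projecting onto `A`
with finite katakernel. -/
def IsEndogeny (γ : Set (A × A)) : Prop :=
  IsAddSubgroupSet γ ∧ (∀ a : A, ∃ b : A, (a, b) ∈ γ) ∧ (kat γ).Finite

/-- Pointwise sum of endogenies. -/
def esum (γ₁ γ₂ : Set (A × A)) : Set (A × A) :=
  {p | ∃ b₁ b₂ : A, (p.1, b₁) ∈ γ₁ ∧ (p.1, b₂) ∈ γ₂ ∧ p.2 = b₁ + b₂}

/-- Pointwise negation of an endogeny. -/
def eneg (γ : Set (A × A)) : Set (A × A) := {p | (p.1, -p.2) ∈ γ}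

/-- Pointwise difference of endogenies. -/
def esub (γ₁ γ₂ : Set (A × A)) : Set (A × A) := esum γ₁ (eneg γ₂)

/-- Composition of endogenies (as relations): `(a, c) ∈ γ₁ ∘ γ₂` iff
`∃ b, b ∈ γ₂[a]` and `c ∈ γ₁[b]`. -/
def ecomp (γ₁ γ₂ : Set (A × A)) : Set (A × A) :=
  {p | ∃ b : A, (p.1, b) ∈ γ₂ ∧ (b, p.2) ∈ γ₁}

/-- Sharp commutation: `im (γ ∘ δ − δ ∘ γ) ⊆ kat γ + kat δ`. -/
def SharpCommute (γ δ : Set (A × A)) : Prop :=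
  eim (esub (ecomp γ δ) (ecomp δ γ)) ⊆ kat γ + kat δ

/-- Equivalence of endogenies: they agree modulo a finite subgroup. -/
def EEquiv (γ₁ γ₂ : Set (A × A)) : Prop :=
  ∃ F : AddSubgroup A, (F : Set A).Finite ∧
    ∀ a : A, fib γ₁ a + (F : Set A) = fib γ₂ a + (F : Set A)

/-- A prering of endogenies: a set of endogenies closed under `+`, `−` and `∘`. -/
def IsPrering (Γ : Set (Set (A × A))) : Prop :=
  (∀ γ ∈ Γ, IsEndogeny γ) ∧ (∀ γ ∈ Γ, ∀ δ ∈ Γ, esum γ δ ∈ Γ) ∧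
  (∀ γ ∈ Γ, eneg γ ∈ Γ) ∧ (∀ γ ∈ Γ, ∀ δ ∈ Γ, ecomp γ δ ∈ Γ)

/-- The katakernel of a prering: the subgroup generated by all the katakernels. -/
def Kat (Γ : Set (Set (A × A))) : AddSubgroup A :=
  AddSubgroup.closure (⋃ γ ∈ Γ, kat γ)

/-! The proof is an induction over the generators of `Kat(Γ, Δ)`, i.e. the katakernels `kat ψ`
of `ψ ∈ Γ ∪ Δ`. For `φ, ψ` in the same prering, `φ[kat ψ] = kat (φ ∘ ψ)` lies in the
katakernel of that prering. For `φ, ψ` in different prerings, every `b ∈ φ[kat ψ]` occurs,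
up to sign, in the image of the commutator of `φ` and `ψ` at `0`, so sharp commutation puts it
in `kat φ + kat ψ`. Since `φ` is a subgroup of `A × A` projecting onto `A`, the set of `a` whose
whole fibre `φ[a]` lies in `Kat(Γ, Δ)` is a subgroup, which therefore contains `Kat(Γ, Δ)`. -/

theorem kat_ecomp (γ δ : Set (A × A)) : kat (ecomp γ δ) = eimg γ (kat δ) :=
  rfl

section SharpCommute

variable {γ δ : Set (A × A)}

theorem SharpCommute.eimg_kat_right_subset (h : SharpCommute γ δ)
    (hγ : ((0 : A), (0 : A)) ∈ γ) (hδ : ((0 : A), (0 : A)) ∈ δ) :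
    eimg γ (kat δ) ⊆ kat γ + kat δ := by
  rintro b ⟨a, ha, hab⟩
  refine h ⟨0, b, 0, ⟨a, ha, hab⟩, ?_, (add_zero b).symm⟩
  show ((0 : A), -0) ∈ ecomp δ γ
  rw [neg_zero]
  exact ⟨0, hγ, hδ⟩

theorem SharpCommute.neg_eimg_kat_left_subset (h : SharpCommute γ δ)
    (hγ : ((0 : A), (0 : A)) ∈ γ) (hδ : ((0 : A), (0 : A)) ∈ δ) :
    -eimg δ (kat γ) ⊆ kat γ + kat δ := by
  rintro b ⟨a, ha, hab⟩
  refine h ⟨0, 0, b, ⟨0, hδ, hγ⟩, ?_, (zero_add b).symm⟩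
  exact ⟨a, ha, hab⟩

end SharpCommute

def coreAddSubgroup (γ : Set (A × A)) (hγ : IsAddSubgroupSet γ)
    (hsurj : ∀ a : A, ∃ b : A, (a, b) ∈ γ) (K : AddSubgroup A) (hkat : kat γ ⊆ K) :
    AddSubgroup A where
  carrier := {a | fib γ a ⊆ K}
  zero_mem' := hkat
  add_mem' {x y} hx hy b hb := by
    obtain ⟨c, hc⟩ := hsurj x
    have hy' : (y, b - c) ∈ γ := by
      simpa [sub_eq_add_neg] using hγ.2.1 _ hb _ (hγ.2.2 _ hc)
    simpa using K.add_mem (hx hc) (hy hy')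
  neg_mem' {x} hx b hb := by
    have hb' : (x, -b) ∈ γ := by simpa using hγ.2.2 _ hb
    simpa using K.neg_mem (hx hb')

theorem eimg_closure_subset {γ : Set (A × A)} (hγ : IsAddSubgroupSet γ)
    (hsurj : ∀ a : A, ∃ b : A, (a, b) ∈ γ) {S : Set A} {K : AddSubgroup A}
    (hkat : kat γ ⊆ K) (hS : eimg γ S ⊆ K) :
    eimg γ (AddSubgroup.closure S) ⊆ K := by
  have hle : AddSubgroup.closure S ≤ coreAddSubgroup γ hγ hsurj K hkat :=
    (AddSubgroup.closure_le _).2 fun s hs _ hb => hS ⟨s, hs, hb⟩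
  rintro b ⟨a, ha, hab⟩
  exact hle ha hab

section Bikatakernel

variable {Γ Δ : Set (Set (A × A))}

theorem Kat_sup_Kat_eq_closure :
    Kat Γ ⊔ Kat Δ = AddSubgroup.closure (⋃ ψ ∈ Γ ∪ Δ, kat ψ) := by
  rw [Set.biUnion_union, AddSubgroup.closure_union]
  rfl

theorem kat_subset_Kat {γ : Set (A × A)} (hγ : γ ∈ Γ) : kat γ ⊆ Kat Γ :=
  fun _ hx => AddSubgroup.subset_closure (Set.mem_biUnion hγ hx)

theorem kat_subset_Kat_sup_Kat {ψ : Set (A × A)} (hψ : ψ ∈ Γ ∪ Δ) :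
    kat ψ ⊆ (Kat Γ ⊔ Kat Δ : AddSubgroup A) :=
  hψ.elim (fun h => (kat_subset_Kat h).trans (le_sup_left (b := Kat Δ)))
    (fun h => (kat_subset_Kat h).trans (le_sup_right (a := Kat Γ)))

theorem kat_add_kat_subset_Kat_sup_Kat {γ δ : Set (A × A)} (hγ : γ ∈ Γ) (hδ : δ ∈ Δ) :
    kat γ + kat δ ⊆ (Kat Γ ⊔ Kat Δ : AddSubgroup A) :=
  AddSubgroup.add_subset (kat_subset_Kat_sup_Kat (Or.inl hγ))
    (kat_subset_Kat_sup_Kat (Or.inr hδ))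

theorem IsPrering.zero_mem (hΓ : IsPrering Γ) {γ : Set (A × A)} (hγ : γ ∈ Γ) :
    ((0 : A), (0 : A)) ∈ γ :=
  (hΓ.1 γ hγ).1.1

theorem IsPrering.eimg_kat_subset_Kat (hΓ : IsPrering Γ) {φ ψ : Set (A × A)}
    (hφ : φ ∈ Γ) (hψ : ψ ∈ Γ) : eimg φ (kat ψ) ⊆ Kat Γ :=
  kat_ecomp φ ψ ▸ kat_subset_Kat (hΓ.2.2.2 φ hφ ψ hψ)

theorem eimg_kat_subset_Kat_sup_Kat (hΓ : IsPrering Γ) (hΔ : IsPrering Δ)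
    (hc : ∀ γ ∈ Γ, ∀ δ ∈ Δ, SharpCommute γ δ) {φ ψ : Set (A × A)}
    (hφ : φ ∈ Γ ∪ Δ) (hψ : ψ ∈ Γ ∪ Δ) :
    eimg φ (kat ψ) ⊆ (Kat Γ ⊔ Kat Δ : AddSubgroup A) := by
  rcases hφ with hφ | hφ <;> rcases hψ with hψ | hψ
  · exact (hΓ.eimg_kat_subset_Kat hφ hψ).trans (le_sup_left (b := Kat Δ))
  · exact ((hc φ hφ ψ hψ).eimg_kat_right_subset (hΓ.zero_mem hφ) (hΔ.zero_mem hψ)).trans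
      (kat_add_kat_subset_Kat_sup_Kat hφ hψ)
  · intro b hb
    have hneg := kat_add_kat_subset_Kat_sup_Kat hψ hφ <|
      (hc ψ hψ φ hφ).neg_eimg_kat_left_subset (hΓ.zero_mem hψ) (hΔ.zero_mem hφ)
        (Set.neg_mem_neg.2 hb)
    simpa using neg_mem hneg
  · exact (hΔ.eimg_kat_subset_Kat hφ hψ).trans (le_sup_right (a := Kat Γ))

end Bikatakernel

/-- Katakernel Lemma, part 2: if `Γ` and `Δ` are sharply
commuting prerings, the bi-katakernel `Kat(Γ, Δ) = Kat(Γ) + Kat(Δ)` is fully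
`Γ`- and `Δ`-invariant. -/
theorem bikat_fully_invariant (Γ Δ : Set (Set (A × A)))
    (hΓ : IsPrering Γ) (hΔ : IsPrering Δ)
    (hc : ∀ γ ∈ Γ, ∀ δ ∈ Δ, SharpCommute γ δ) :
    ∀ φ ∈ Γ ∪ Δ, eimg φ ((Kat Γ ⊔ Kat Δ : AddSubgroup A) : Set A) ⊆
      ((Kat Γ ⊔ Kat Δ : AddSubgroup A) : Set A) := by
  intro φ hφ
  have hφ_endo : IsEndogeny φ := hφ.elim (hΓ.1 φ) (hΔ.1 φ)
  have hgen : eimg φ (⋃ ψ ∈ Γ ∪ Δ, kat ψ) ⊆ (Kat Γ ⊔ Kat Δ : AddSubgroup A) := by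
    rintro b ⟨a, ha, hab⟩
    obtain ⟨ψ, hψ, haψ⟩ := Set.mem_iUnion₂.1 ha
    exact eimg_kat_subset_Kat_sup_Kat hΓ hΔ hc hφ hψ ⟨a, haψ, hab⟩
  conv_lhs => rw [Kat_sup_Kat_eq_closure]
  exact eimg_closure_subset hφ_endo.1 hφ_endo.2.1 (kat_subset_Kat_sup_Kat hφ) hgen
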